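/- Define h : {(x,y) : 0 ≤ x ≤ y ≤ 1} → ℝ by h(x,y) = max(x+y, 2/3) + (1/2)·max(x+y, 1) − (1/2)·max(y, 2/3) − 1/6. Then for all 0 ≤ θ₁ ≤ θ₂ ≤ θ₃ ≤ 1, writing s = max(θ₁+θ₂+θ₃, 1), we have 2s ≤ h(θ₁,θ₂) + h(θ₁,θ₃) + h(θ₂,θ₃) ≤ (7/3)·s. -/

import Mathlib

/-!
Write `hG x y = sumPart (x + y) - 1/2 * max y (2/3) - 1/6`, where
`sumPart p = max (7/6) (max (p + 1/2) (3/2 * p))` is convex and piecewise linear with breakpoints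
`2/3` and `1`. In the lower bound the convex terms `sumPart` may be replaced by
any of their linear pieces, so only the terms entering with a minus sign, `max b (2/3)`,
`max c (2/3)` and `max (a + b + c) 1`, need a case split. In the upper bound the roles are swapped
and we split on the piece of `sumPart` containing each pairwise sum. Every case is then linear.
-/

noncomputable def hG (x y : ℝ) : ℝ :=
  max (x + y) (2 / 3) + 1 / 2 * max (x + y) 1 - 1 / 2 * max y (2 / 3) - 1 / 6

noncomputable def sumPart (p : ℝ) : ℝ := max p (2 / 3) + 1 / 2 * max p 1

lemma hG_eq_sumPart (x y : ℝ) : hG x y = sumPart (x + y) - 1 / 2 * max y (2 / 3) - 1 / 6 :=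
  rfl

lemma le_sumPart (p : ℝ) : 7 / 6 ≤ sumPart p ∧ p + 1 / 2 ≤ sumPart p ∧ 3 / 2 * p ≤ sumPart p := by
  rw [sumPart]
  refine ⟨?_, ?_, ?_⟩ <;>
    linarith [le_max_left p (2 / 3), le_max_right p (2 / 3), le_max_left p 1, le_max_right p 1]

lemma sumPart_cases (p : ℝ) :
    (p ≤ 2 / 3 ∧ sumPart p = 7 / 6) ∨ (2 / 3 ≤ p ∧ p ≤ 1 ∧ sumPart p = p + 1 / 2) ∨
      (1 ≤ p ∧ sumPart p = 3 / 2 * p) := by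
  rcases le_total p (2 / 3) with h | h
  · exact Or.inl ⟨h, by rw [sumPart, max_eq_right h, max_eq_right (by linarith)]; norm_num⟩
  rcases le_total p 1 with h' | h'
  · exact Or.inr <| Or.inl ⟨h, h', by rw [sumPart, max_eq_left h, max_eq_right h']; ring⟩
  · exact Or.inr <| Or.inr ⟨h', by rw [sumPart, max_eq_left h, max_eq_left h']; ring⟩

theorem two_mul_max_le_hG_sum {a b c : ℝ} (ha : 0 ≤ a) :
    2 * max (a + b + c) 1 ≤ hG a b + hG a c + hG b c := by
  simp only [hG_eq_sumPart]
  obtain ⟨h₁, h₂, h₃⟩ := le_sumPart (a + b)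
  obtain ⟨h₄, h₅, h₆⟩ := le_sumPart (a + c)
  obtain ⟨h₇, h₈, h₉⟩ := le_sumPart (b + c)
  rcases max_cases (a + b + c) 1 with hS | hS <;> rcases max_cases b (2 / 3) with hb | hb <;>
    rcases max_cases c (2 / 3) with hc | hc <;> linarith

theorem hG_sum_le_seven_thirds_mul_max {a b c : ℝ} (ha : 0 ≤ a) (hab : a ≤ b) (hbc : b ≤ c)
    (hc : c ≤ 1) : hG a b + hG a c + hG b c ≤ 7 / 3 * max (a + b + c) 1 := by
  simp only [hG_eq_sumPart]
  rcases sumPart_cases (a + b) with h₁ | h₁ | h₁ <;>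
    rcases sumPart_cases (a + c) with h₂ | h₂ | h₂ <;>
    rcases sumPart_cases (b + c) with h₃ | h₃ | h₃ <;>
    linarith [le_max_left (a + b + c) 1, le_max_right (a + b + c) 1, le_max_left b (2 / 3),
      le_max_right b (2 / 3), le_max_left c (2 / 3), le_max_right c (2 / 3)]

theorem stmt_5 : ∀ θ₁ θ₂ θ₃ : ℝ, 0 ≤ θ₁ → θ₁ ≤ θ₂ → θ₂ ≤ θ₃ → θ₃ ≤ 1 →
    2 * max (θ₁ + θ₂ + θ₃) 1 ≤ hG θ₁ θ₂ + hG θ₁ θ₃ + hG θ₂ θ₃ ∧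
    hG θ₁ θ₂ + hG θ₁ θ₃ + hG θ₂ θ₃ ≤ 7 / 3 * max (θ₁ + θ₂ + θ₃) 1 :=
  fun _ _ _ h₀ h₁₂ h₂₃ h₃ =>
    ⟨two_mul_max_le_hG_sum h₀, hG_sum_le_seven_thirds_mul_max h₀ h₁₂ h₂₃ h₃⟩
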